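/- Let B_1 be the bowtie graph (two triangles sharing exactly one common vertex, on 5 vertices) and let B_2 be the graph on 6 vertices obtained from the diamond K_{2,1,1} (the complete graph K_4 minus one edge) by attaching two pendant vertices to one of its two vertices of degree 3. Then B_1(14) ∈ F_{−5} and B_2(9) ∈ F_{−5}; that is, λ_min(S(B_1(14))) < −5 and every proper induced subgraph H of B_1(14) satisfies λ_min(S(H)) ≥ −5, and likewise λ_min(S(B_2(9))) < −5 and every proper induced subgraph H of B_2(9) satisfies λ_min(S(H)) ≥ −5. -/

import Mathlib

/-!
Write a vector on `G(s)` as `(x, y)`, with `y` living on the isolated vertices, and put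
`X = ∑ x`, `Y = ∑ y`. The quadratic form of `S + 5I` is then `q(x) + 2XY + Y² + 4‖y‖²`,
where `q` is the form of `S(G) + 5I`. If `y` is carried by `m` vertices, Cauchy–Schwarz gives
`m‖y‖² ≥ Y²` (equality for constant `y`), and minimising over `Y` shows that the form is
nonnegative exactly when `m X² ≤ (m + 4) q(x)`, i.e. `S(G) + 5I - m/(m+4) J ⪰ 0`.
Since `λ_min` can only grow on principal submatrices, it suffices to delete one vertex. So
`G(s) ∈ F_{-5}` comes down to three statements about `G`: the inequality fails for `m = s`,
holds for `m = s - 1` (an isolated vertex deleted), and holds for `m = s` on every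
vertex-deleted subgraph of `G`. For `B₁` and `B₂` these are quadratic forms in at most six
variables, handled by an explicit witness and explicit LDLᵀ factorisations.
-/

open Matrix

/-- A Seidel matrix: symmetric, zero diagonal, off-diagonal entries `±1`. -/
def IsSeidel {n : ℕ} (S : Matrix (Fin n) (Fin n) ℝ) : Prop :=
  S.IsSymm ∧ (∀ i, S i i = 0) ∧ ∀ i j, i ≠ j → S i j = 1 ∨ S i j = -1

/-- Smallest eigenvalue of a real symmetric matrix (junk value `0` if not Hermitian). -/
noncomputable def minEig {m : Type*} [Fintype m] [DecidableEq m] (A : Matrix m m ℝ) : ℝ := by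
  classical
  exact if hA : A.IsHermitian then ⨅ i, hA.eigenvalues i else 0

/-- Largest eigenvalue of a real symmetric matrix (junk value `0` if not Hermitian). -/
noncomputable def maxEig {m : Type*} [Fintype m] [DecidableEq m] (A : Matrix m m ℝ) : ℝ := by
  classical
  exact if hA : A.IsHermitian then ⨆ i, hA.eigenvalues i else 0

/-- The Seidel matrix of a simple graph `G`, i.e. `J - I - 2A(G)`:
zero diagonal, `-1` on adjacent pairs, `1` on distinct non-adjacent pairs. -/
noncomputable def seidelOf {V : Type*} [Fintype V] (G : SimpleGraph V) : Matrix V V ℝ := by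
  classical
  exact Matrix.of fun i j => if i = j then 0 else if G.Adj i j then -1 else 1

/-- Smallest eigenvalue of the Seidel matrix of a finite graph. -/
noncomputable def minSeidelEig {V : Type*} [Finite V] (G : SimpleGraph V) : ℝ := by
  classical
  letI := Fintype.ofFinite V
  exact minEig (seidelOf G)

/-- Spectral radius (largest adjacency eigenvalue) of a finite graph. -/
noncomputable def specRad {V : Type*} [Finite V] (G : SimpleGraph V) : ℝ := by
  classical
  letI := Fintype.ofFinite V
  exact maxEig (G.adjMatrix ℝ)

/-- Switching equivalence: `T = D S D` for some diagonal `±1` matrix `D`. -/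
def SwEquiv {n : ℕ} (S T : Matrix (Fin n) (Fin n) ℝ) : Prop :=
  ∃ ε : Fin n → ℝ, (∀ i, ε i = 1 ∨ ε i = -1) ∧
    T = Matrix.diagonal ε * S * Matrix.diagonal ε

/-- The switching graph of a Seidel matrix `S`: the graph on `2n` vertices whose Seidel
matrix is the block matrix `((S, I - S), (I - S, S))`, adjacency given by entries `-1`. -/
def switchGraph {n : ℕ} (S : Matrix (Fin n) (Fin n) ℝ) : SimpleGraph (Fin n ⊕ Fin n) :=
  SimpleGraph.fromRel fun x y => Matrix.fromBlocks S (1 - S) (1 - S) S x y = -1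

/-- Independence number of a graph. -/
noncomputable def indepNum {V : Type*} (G : SimpleGraph V) : ℕ := Gᶜ.cliqueNum

/-- The graph consisting of `t` disjoint copies of `K₂`. -/
def nK2 (t : ℕ) : SimpleGraph (Fin t × Fin 2) :=
  SimpleGraph.fromRel fun p q => p.1 = q.1

/-- Membership in `F_{-5}`: `λ_min(S(G)) < -5` while every proper induced subgraph `H`
satisfies `λ_min(S(H)) ≥ -5`. -/
def MemF5 {V : Type*} [Finite V] (G : SimpleGraph V) : Prop :=
  minSeidelEig G < -5 ∧ ∀ s : Set V, s ≠ Set.univ → -5 ≤ minSeidelEig (G.induce s)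

/-- The bowtie `B₁`: two triangles `{0,1,2}` and `{2,3,4}` sharing the vertex `2`. -/
def bowtie : SimpleGraph (Fin 5) :=
  SimpleGraph.fromRel fun i j =>
    (i = 0 ∧ j = 1) ∨ (i = 0 ∧ j = 2) ∨ (i = 1 ∧ j = 2) ∨
    (i = 2 ∧ j = 3) ∨ (i = 2 ∧ j = 4) ∨ (i = 3 ∧ j = 4)

/-- The graph `B₂`: the diamond on `{1,2,3,4}` (all edges except `2–4`), with two pendant
vertices `0` and `5` attached to the degree-3 vertex `1`. -/
def B2graph : SimpleGraph (Fin 6) :=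
  SimpleGraph.fromRel fun i j =>
    (i = 0 ∧ j = 1) ∨ (i = 1 ∧ j = 2) ∨ (i = 2 ∧ j = 3) ∨ (i = 3 ∧ j = 4) ∨
    (i = 4 ∧ j = 1) ∨ (i = 1 ∧ j = 3) ∨ (i = 1 ∧ j = 5)

lemma neg_le_minEig_iff_posSemidef {ι : Type*} [Fintype ι] [DecidableEq ι] {A : Matrix ι ι ℝ}
    (hA : A.IsHermitian) {c : ℝ} (hc : 0 ≤ c) :
    -c ≤ minEig A ↔ (A + c • 1).PosSemidef := by
  have hshift : A + c • 1 = Unitary.conjStarAlgAut ℝ _ hA.eigenvectorUnitary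
      (diagonal fun i => hA.eigenvalues i + c) := by
    rw [← diagonal_add, ← smul_one_eq_diagonal, map_add, map_smul, map_one]
    conv_lhs => rw [hA.spectral_theorem]
    rfl
  rw [hshift, Unitary.conjStarAlgAut_apply,
    Unitary.isUnit_coe.posSemidef_star_right_conjugate_iff, posSemidef_diagonal_iff, minEig,
    dif_pos hA]
  rcases isEmpty_or_nonempty ι with hι | hι
  · simp [hc]
  · simp only [le_ciInf_iff (Finite.bddBelow_range _), neg_le_iff_add_nonneg]

lemma Matrix.posSemidef_submatrix_of_dotProduct_mulVec_nonneg {V : Type*} [Fintype V]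
    {M : Matrix V V ℝ} (hM : M.IsHermitian) (s : Set V)
    (h : ∀ x : V → ℝ, (∀ v ∉ s, x v = 0) → 0 ≤ x ⬝ᵥ (M *ᵥ x)) :
    (M.submatrix ((↑) : s → V) (↑)).PosSemidef := by
  classical
  set D : Matrix V V ℝ := diagonal fun v => if v ∈ s then 1 else 0
  have hD : (Dᴴ * M * D).PosSemidef := by
    refine .of_dotProduct_mulVec_nonneg (isHermitian_conjTranspose_mul_mul D hM) fun x ↦ ?_
    rw [star_trivial, conjTranspose_eq_transpose_of_trivial, ← mulVec_mulVec, ← mulVec_mulVec,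
      dotProduct_mulVec, vecMul_transpose]
    exact h (D *ᵥ x) fun v hv ↦ by simp [D, mulVec_diagonal, hv]
  convert hD.submatrix ((↑) : s → V) using 1
  ext u w
  simp [D, mul_apply, diagonal]

lemma add_two_mul_add_sq_add_nonneg {m q X Y S : ℝ} (hm : 0 ≤ m) (hS : 0 ≤ S)
    (hq : m * X ^ 2 ≤ (m + 4) * q) (hY : Y ^ 2 ≤ m * S) :
    0 ≤ q + 2 * X * Y + Y ^ 2 + 4 * S := by
  rcases hm.eq_or_lt with rfl | hm
  · nlinarith
  · have : 0 ≤ m * (m + 4) * (q + 2 * X * Y + Y ^ 2 + 4 * S) := by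
      nlinarith [sq_nonneg (m * X + (m + 4) * Y)]
    exact (mul_nonneg_iff_of_pos_left (by positivity)).1 this

variable {V W : Type*}

lemma seidelOf_isHermitian [Fintype V] (G : SimpleGraph V) : (seidelOf G).IsHermitian := by
  ext i j
  simp only [seidelOf, conjTranspose_apply, of_apply, star_trivial]
  congr 1
  · exact propext eq_comm
  · rw [G.adj_comm]

lemma seidelOf_induce [Fintype V] (G : SimpleGraph V) (s : Set V) [Fintype s] :
    seidelOf (G.induce s) = (seidelOf G).submatrix ((↑) : s → V) (↑) := by
  ext u w
  simp only [seidelOf, of_apply, submatrix_apply]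
  congr 1
  exact propext Subtype.ext_iff

lemma minSeidelEig_eq [Fintype V] [DecidableEq V] (G : SimpleGraph V) :
    minSeidelEig G = minEig (seidelOf G) := by
  unfold minSeidelEig
  convert rfl

noncomputable def seidelForm [Fintype V] [DecidableEq V] (G : SimpleGraph V)
    (x : V → ℝ) : ℝ :=
  x ⬝ᵥ ((seidelOf G + (5 : ℝ) • 1) *ᵥ x)

lemma memF5_of_seidelForm [Fintype V] [DecidableEq V] {G : SimpleGraph V}
    (hneg : ∃ x, seidelForm G x < 0) (hdel : ∀ v x, x v = 0 → 0 ≤ seidelForm G x) :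
    MemF5 G := by
  classical
  have hherm : (seidelOf G + (5 : ℝ) • 1).IsHermitian :=
    (seidelOf_isHermitian G).add (isHermitian_one.smul (IsSelfAdjoint.all _))
  refine ⟨?_, fun s hs ↦ ?_⟩
  · obtain ⟨x, hx⟩ := hneg
    rw [minSeidelEig_eq, ← not_le,
      neg_le_minEig_iff_posSemidef (seidelOf_isHermitian G) (by norm_num)]
    intro hpsd
    simpa using (hpsd.dotProduct_mulVec_nonneg x).trans_lt hx
  · obtain ⟨v, hv⟩ := (Set.ne_univ_iff_exists_notMem s).1 hs
    rw [minSeidelEig_eq, neg_le_minEig_iff_posSemidef (seidelOf_isHermitian _) (by norm_num),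
      seidelOf_induce]
    convert_to ((seidelOf G + (5 : ℝ) • 1).submatrix ((↑) : s → V) (↑)).PosSemidef
    · ext u w
      simp [one_apply, Subtype.ext_iff]
    exact posSemidef_submatrix_of_dotProduct_mulVec_nonneg hherm s fun x hx ↦
      hdel v x (hx v hv)

lemma seidelOf_sum_bot [Fintype V] [Fintype W] [DecidableEq W] (G : SimpleGraph V) :
    seidelOf (G ⊕g (⊥ : SimpleGraph W)) =
      fromBlocks (seidelOf G) (of fun _ _ ↦ 1) (of fun _ _ ↦ 1) (of (fun _ _ ↦ 1) - 1) := by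
  ext (a | a) (b | b)
  · simp only [seidelOf, of_apply, fromBlocks_apply₁₁]
    congr 2
    exact propext Sum.inl_injective.eq_iff
  · simp [seidelOf]
  · simp [seidelOf]
  · simp only [seidelOf, SimpleGraph.sum_adj, SimpleGraph.bot_adj, of_apply, Sum.inr.injEq,
      ↓reduceIte, fromBlocks_apply₂₂, Matrix.sub_apply, one_apply]
    split_ifs <;> norm_num

lemma seidelForm_sum_bot [Fintype V] [Fintype W] [DecidableEq V] [DecidableEq W]
    (G : SimpleGraph V) (x : V → ℝ) (y : W → ℝ) :
    seidelForm (G ⊕g (⊥ : SimpleGraph W)) (Sum.elim x y) =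
      seidelForm G x + 2 * (∑ v, x v) * (∑ w, y w) + (∑ w, y w) ^ 2 + 4 * ∑ w, y w ^ 2 := by
  rw [seidelForm, seidelForm, seidelOf_sum_bot, ← fromBlocks_one, fromBlocks_smul,
    fromBlocks_add, fromBlocks_mulVec, Sum.elim_comp_inl, Sum.elim_comp_inr,
    sumElim_dotProduct_sumElim]
  simp only [add_zero, smul_zero, add_mulVec, sub_mulVec, smul_mulVec, one_mulVec,
    dotProduct_add, dotProduct_sub, dotProduct_smul]
  simp only [dotProduct, mulVec, of_apply, one_mul, smul_eq_mul, ← Finset.sum_mul, sq]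
  ring

lemma seidelForm_sum_bot_nonneg [Fintype V] [Fintype W] [DecidableEq V] [DecidableEq W]
    (G : SimpleGraph V) (x : V → ℝ) {y : W → ℝ} (T : Finset W) (hy : ∀ w ∉ T, y w = 0)
    (hx : T.card * (∑ v, x v) ^ 2 ≤ (T.card + 4) * seidelForm G x) :
    0 ≤ seidelForm (G ⊕g (⊥ : SimpleGraph W)) (Sum.elim x y) := by
  have hT (f : W → ℝ) (hf : ∀ w ∉ T, f w = 0) : ∑ w, f w = ∑ w ∈ T, f w :=
    (Finset.sum_subset (Finset.subset_univ T) fun w _ hw ↦ hf w hw).symm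
  rw [seidelForm_sum_bot]
  refine add_two_mul_add_sq_add_nonneg (Nat.cast_nonneg _)
    (Finset.sum_nonneg fun w _ ↦ sq_nonneg _) hx ?_
  rw [hT y hy, hT (y · ^ 2) fun w hw ↦ by simp [hy w hw]]
  exact sq_sum_le_card_mul_sum_sq

lemma memF5_sum_bot [Fintype V] [DecidableEq V] (G : SimpleGraph V) (k : ℕ)
    (hneg : ∃ x : V → ℝ, (k + 5) * seidelForm G x < (k + 1) * (∑ v, x v) ^ 2)
    (hiso : ∀ x : V → ℝ, k * (∑ v, x v) ^ 2 ≤ (k + 4) * seidelForm G x)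
    (hdel : ∀ v (x : V → ℝ), x v = 0 →
      (k + 1) * (∑ v, x v) ^ 2 ≤ (k + 5) * seidelForm G x) :
    MemF5 (G ⊕g (⊥ : SimpleGraph (Fin (k + 1)))) := by
  refine memF5_of_seidelForm ?_ fun v z hz ↦ ?_
  · obtain ⟨x, hx⟩ := hneg
    -- equal weights on the isolated vertices minimise the form for a fixed total weight
    set y : Fin (k + 1) → ℝ := fun _ ↦ -(∑ v, x v) / (k + 5)
    have hk : (0 : ℝ) < k + 5 := by positivity
    have hval : seidelForm (G ⊕g ⊥) (Sum.elim x y) =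
        seidelForm G x - (k + 1) * (∑ v, x v) ^ 2 / (k + 5) := by
      rw [seidelForm_sum_bot]
      simp only [y, Finset.sum_const, Finset.card_univ, Fintype.card_fin, nsmul_eq_mul]
      field_simp
      push_cast
      ring
    refine ⟨Sum.elim x y, ?_⟩
    rw [hval, sub_neg, lt_div_iff₀ hk]
    linarith
  · rw [← Sum.elim_comp_inl_inr z]
    rcases v with v | j
    · refine seidelForm_sum_bot_nonneg G _ Finset.univ (by simp) ?_
      simp only [Finset.card_univ, Fintype.card_fin]
      push_cast
      linarith [hdel v (z ∘ Sum.inl) hz]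
    · refine seidelForm_sum_bot_nonneg G _ (Finset.univ.erase j) (by simpa using hz) ?_
      simpa using hiso (z ∘ Sum.inl)

lemma seidelForm_bowtie (x : Fin 5 → ℝ) :
    seidelForm bowtie x = (∑ i, x i) ^ 2 + 4 * ∑ i, x i ^ 2 -
      4 * (x 0 * x 1 + x 0 * x 2 + x 1 * x 2 + x 2 * x 3 + x 2 * x 4 + x 3 * x 4) := by
  simp [seidelForm, seidelOf, bowtie, dotProduct, mulVec, Fin.sum_univ_five, one_apply]
  ring

lemma seidelForm_B2graph (x : Fin 6 → ℝ) :
    seidelForm B2graph x = (∑ i, x i) ^ 2 + 4 * ∑ i, x i ^ 2 -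
      4 * (x 0 * x 1 + x 1 * x 2 + x 2 * x 3 + x 3 * x 4 + x 1 * x 4 + x 1 * x 3 + x 1 * x 5) := by
  simp [seidelForm, seidelOf, B2graph, dotProduct, mulVec, Fin.sum_univ_six, one_apply]
  ring

theorem memF5_bowtie_sum_bot : MemF5 (bowtie ⊕g (⊥ : SimpleGraph (Fin 14))) := by
  refine memF5_sum_bot bowtie 13 ⟨![2, 2, 3, 2, 2], ?_⟩ (fun x ↦ ?_) fun v x hv ↦ ?_
  · simp [seidelForm_bowtie, Fin.sum_univ_five]
    norm_num
  · rw [seidelForm_bowtie]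
    simp only [Fin.sum_univ_five, Nat.cast_ofNat]
    -- the squares are the rows of an LDLᵀ factorisation of the quadratic form
    linarith [sq_nonneg (36 * x 0 - 15 * x 1 - 15 * x 2 + 2 * x 3 + 2 * x 4),
      sq_nonneg (21 * x 1 - 15 * x 2 + 2 * x 3 + 2 * x 4), sq_nonneg (6 * x 2 - 5 * x 3 - 5 * x 4),
      sq_nonneg (x 3 - x 4)]
  · rw [seidelForm_bowtie]
    simp only [Fin.sum_univ_five, Nat.cast_ofNat]
    fin_cases v <;> simp only [Fin.zero_eta, Fin.mk_one, Fin.reduceFinMk] at hv <;> rw [hv]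
    · linarith [sq_nonneg (19 * x 1 - 8 * x 2 + x 3 + x 4),
        sq_nonneg (33 * x 2 - 16 * x 3 - 16 * x 4), sq_nonneg (56 * x 3 - 43 * x 4),
        sq_nonneg (x 4)]
    · linarith [sq_nonneg (19 * x 0 - 8 * x 2 + x 3 + x 4),
        sq_nonneg (33 * x 2 - 16 * x 3 - 16 * x 4), sq_nonneg (56 * x 3 - 43 * x 4),
        sq_nonneg (x 4)]
    · linarith [sq_nonneg (19 * x 0 - 8 * x 1 + x 3 + x 4), sq_nonneg (11 * x 1 + x 3 + x 4),
        sq_nonneg (23 * x 3 - 10 * x 4), sq_nonneg (x 4)]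
    · linarith [sq_nonneg (19 * x 0 - 8 * x 1 - 8 * x 2 + x 4),
        sq_nonneg (11 * x 1 - 8 * x 2 + x 4), sq_nonneg (9 * x 2 - 8 * x 4), sq_nonneg (x 4)]
    · linarith [sq_nonneg (19 * x 0 - 8 * x 1 - 8 * x 2 + x 3),
        sq_nonneg (11 * x 1 - 8 * x 2 + x 3), sq_nonneg (9 * x 2 - 8 * x 3), sq_nonneg (x 3)]

theorem memF5_B2graph_sum_bot : MemF5 (B2graph ⊕g (⊥ : SimpleGraph (Fin 9))) := by
  refine memF5_sum_bot B2graph 8 ⟨![1, 4, 3, 4, 3, 1], ?_⟩ (fun x ↦ ?_) fun v x hv ↦ ?_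
  · simp [seidelForm_B2graph, Fin.sum_univ_six]
    norm_num
  · rw [seidelForm_B2graph]
    simp only [Fin.sum_univ_six, Nat.cast_ofNat]
    linarith [sq_nonneg (13 * x 0 - 5 * x 1 + x 2 + x 3 + x 4 + x 5),
      sq_nonneg (12 * x 1 - 5 * x 2 - 5 * x 3 - 5 * x 4 - 5 * x 5),
      sq_nonneg (11 * x 2 - 7 * x 3 - x 4 - x 5), sq_nonneg (12 * x 3 - 14 * x 4 - 3 * x 5),
      sq_nonneg (2 * x 4 - 3 * x 5), sq_nonneg (x 5)]
  · rw [seidelForm_B2graph]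
    simp only [Fin.sum_univ_six, Nat.cast_ofNat]
    fin_cases v <;> simp only [Fin.zero_eta, Fin.mk_one, Fin.reduceFinMk] at hv <;> rw [hv]
    · linarith [sq_nonneg (28 * x 1 - 11 * x 2 - 11 * x 3 - 11 * x 4 - 11 * x 5),
        sq_nonneg (51 * x 2 - 33 * x 3 - 5 * x 4 - 5 * x 5),
        sq_nonneg (18 * x 3 - 22 * x 4 - 5 * x 5), sq_nonneg (2 * x 4 - 5 * x 5), sq_nonneg (x 5)]
    · linarith [sq_nonneg (14 * x 0 + x 2 + x 3 + x 4 + x 5),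
        sq_nonneg (15 * x 2 - 6 * x 3 + x 4 + x 5), sq_nonneg (9 * x 3 - 4 * x 4 + x 5),
        sq_nonneg (8 * x 4 + x 5), sq_nonneg (x 5)]
    · linarith [sq_nonneg (28 * x 0 - 11 * x 1 + 2 * x 3 + 2 * x 4 + 2 * x 5),
        sq_nonneg (51 * x 1 - 22 * x 3 - 22 * x 4 - 22 * x 5),
        sq_nonneg (92 * x 3 - 61 * x 4 - 10 * x 5), sq_nonneg (31 * x 4 - 10 * x 5),
        sq_nonneg (x 5)]
    · linarith [sq_nonneg (28 * x 0 - 11 * x 1 + 2 * x 2 + 2 * x 4 + 2 * x 5),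
        sq_nonneg (51 * x 1 - 22 * x 2 - 22 * x 4 - 22 * x 5),
        sq_nonneg (46 * x 2 - 5 * x 4 - 5 * x 5), sq_nonneg (41 * x 4 - 5 * x 5), sq_nonneg (x 5)]
    · linarith [sq_nonneg (28 * x 0 - 11 * x 1 + 2 * x 2 + 2 * x 3 + 2 * x 5),
        sq_nonneg (51 * x 1 - 22 * x 2 - 22 * x 3 - 22 * x 5),
        sq_nonneg (92 * x 2 - 61 * x 3 - 10 * x 5), sq_nonneg (31 * x 3 - 10 * x 5),
        sq_nonneg (x 5)]
    · linarith [sq_nonneg (28 * x 0 - 11 * x 1 + 2 * x 2 + 2 * x 3 + 2 * x 4),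
        sq_nonneg (51 * x 1 - 22 * x 2 - 22 * x 3 - 22 * x 4),
        sq_nonneg (92 * x 2 - 61 * x 3 - 10 * x 4), sq_nonneg (93 * x 3 - 122 * x 4),
        sq_nonneg (x 4)]

/-- `B₁(14) ∈ F_{-5}` and `B₂(9) ∈ F_{-5}`. -/
theorem stmt_14 :
    MemF5 (bowtie ⊕g (⊥ : SimpleGraph (Fin 14))) ∧
    MemF5 (B2graph ⊕g (⊥ : SimpleGraph (Fin 9))) :=
  ⟨memF5_bowtie_sum_bot, memF5_B2graph_sum_bot⟩
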